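/- arXiv:2502.09249 — 4 statements merged into one kernel-verified Lean document; each statement's English description precedes it below -/
import Mathlib

section
/- Adversary lower bound for purification: let 0 < δ < 1/2 and let O₀, O₁ be the reflections in ℂ² about φ₀ = √(1/2+δ)e₀ + √(1/2−δ)e₁ and φ₁ = √(1/2−δ)e₀ + √(1/2+δ)e₁ respectively. Suppose H is a Hilbert space and v₀, v₁ ∈ H ⊗ ℂ² satisfy the constraint 1 − (−1) = ⟨v₀, (I ⊗ (I − O₀*O₁)) v₁⟩, i.e. 2 = ⟨v₀, v₁⟩ − ⟨(I⊗O₀)v₀, (I⊗O₁)v₁⟩. Then max(‖v₀‖², ‖v₁‖²) ≥ 1/(2δ). -/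
/-!
Writing `t = 2ab`, the oracles are the real reflections `O₀ = [[2δ, t], [t, -2δ]]` and
`O₁ = [[-2δ, t], [t, 2δ]]`, and `(2δ)² + t² = 1`. Hence `I - O₀* O₁ = 4δ R` for the rotation
`R = [[2δ, -t], [t, 2δ]]`, the constraint reads `2 = 4δ ⟨v₀, (I ⊗ R) v₁⟩`, and Cauchy–Schwarz with
`‖(I ⊗ R) v₁‖ = ‖v₁‖` gives `1 / (2δ) ≤ ‖v₀‖ ‖v₁‖ ≤ max (‖v₀‖², ‖v₁‖²)`.
-/

open scoped Matrix

namespace Matrix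

variable {ι 𝕜 H : Type*} [Fintype ι] [RCLike 𝕜] [NormedAddCommGroup H] [InnerProductSpace 𝕜 H]

/-- The operator `I ⊗ M` on `H ⊗ 𝕜^ι`, the latter realised as `ι`-indexed families in `H` with
the `ℓ²` norm. -/
def ampliate (M : Matrix ι ι 𝕜) (v : PiLp 2 (fun _ : ι => H)) : PiLp 2 (fun _ : ι => H) :=
  WithLp.toLp 2 fun i => ∑ j, M i j • v j

@[simp]
theorem ampliate_apply (M : Matrix ι ι 𝕜) (v : PiLp 2 (fun _ : ι => H)) (i : ι) :
    M.ampliate v i = ∑ j, M i j • v j := rfl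

theorem ampliate_sub (M N : Matrix ι ι 𝕜) (v : PiLp 2 (fun _ : ι => H)) :
    (M - N).ampliate v = M.ampliate v - N.ampliate v := by
  ext i; simp [sub_smul, Finset.sum_sub_distrib]

theorem ampliate_smul (c : 𝕜) (M : Matrix ι ι 𝕜) (v : PiLp 2 (fun _ : ι => H)) :
    (c • M).ampliate v = c • M.ampliate v := by
  ext i; simp [Finset.smul_sum, mul_smul]

theorem ampliate_one [DecidableEq ι] (v : PiLp 2 (fun _ : ι => H)) :
    (1 : Matrix ι ι 𝕜).ampliate v = v := by
  ext i; simp [one_apply, ite_smul]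

theorem ampliate_mul (M N : Matrix ι ι 𝕜) (v : PiLp 2 (fun _ : ι => H)) :
    (M * N).ampliate v = M.ampliate (N.ampliate v) := by
  ext i
  simp only [ampliate_apply, mul_apply, Finset.sum_smul, Finset.smul_sum, mul_smul]
  exact Finset.sum_comm

theorem inner_ampliate_left (M : Matrix ι ι 𝕜) (v w : PiLp 2 (fun _ : ι => H)) :
    inner 𝕜 (M.ampliate v) w = inner 𝕜 v (Mᴴ.ampliate w) := by
  simp only [PiLp.inner_apply, ampliate_apply, sum_inner, inner_sum, inner_smul_left,
    inner_smul_right, conjTranspose_apply, RCLike.star_def]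
  exact Finset.sum_comm

theorem norm_ampliate_of_mem_unitary [DecidableEq ι] {U : Matrix ι ι 𝕜}
    (hU : U ∈ unitary (Matrix ι ι 𝕜)) (v : PiLp 2 (fun _ : ι => H)) :
    ‖U.ampliate v‖ = ‖v‖ := by
  have h : inner 𝕜 (U.ampliate v) (U.ampliate v) = inner 𝕜 v v := by
    rw [inner_ampliate_left, ← ampliate_mul, ← star_eq_conjTranspose,
      Unitary.star_mul_self_of_mem hU, ampliate_one]
  rw [inner_self_eq_norm_sq_to_K, inner_self_eq_norm_sq_to_K] at h
  exact (pow_left_inj₀ (norm_nonneg _) (norm_nonneg _) two_ne_zero).1 (by exact_mod_cast h)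

theorem norm_inner_ampliate_le_of_mem_unitary [DecidableEq ι] {U : Matrix ι ι 𝕜}
    (hU : U ∈ unitary (Matrix ι ι 𝕜)) (v w : PiLp 2 (fun _ : ι => H)) :
    ‖inner 𝕜 v (U.ampliate w)‖ ≤ ‖v‖ * ‖w‖ :=
  (norm_inner_le_norm _ _).trans_eq (by rw [norm_ampliate_of_mem_unitary hU])

theorem inner_sub_inner_ampliate [DecidableEq ι] (M N : Matrix ι ι 𝕜)
    (v w : PiLp 2 (fun _ : ι => H)) :
    inner 𝕜 v w - inner 𝕜 (M.ampliate v) (N.ampliate w) = inner 𝕜 v ((1 - Mᴴ * N).ampliate w) := by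
  rw [inner_ampliate_left, ← ampliate_mul, ampliate_sub, ampliate_one, inner_sub_right]

end Matrix

section TwoByTwo

variable {𝕜 : Type*} [RCLike 𝕜]

/-- For `c = cos θ`, `s = sin θ`: the reflection in the line at angle `θ / 2`; `rotationMatrix c s`
is the rotation by `θ`. -/
def reflectionMatrix (c s : ℝ) : Matrix (Fin 2) (Fin 2) 𝕜 := !![(c : 𝕜), s; s, -c]

def rotationMatrix (c s : ℝ) : Matrix (Fin 2) (Fin 2) 𝕜 := !![(c : 𝕜), -s; s, c]

theorem rotationMatrix_mem_unitary {c s : ℝ} (h : c ^ 2 + s ^ 2 = 1) :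
    (rotationMatrix c s : Matrix (Fin 2) (Fin 2) 𝕜) ∈ unitary (Matrix (Fin 2) (Fin 2) 𝕜) := by
  have h' : (c : 𝕜) ^ 2 + (s : 𝕜) ^ 2 = 1 := by exact_mod_cast h
  constructor <;>
  · ext i j
    fin_cases i <;> fin_cases j <;>
      simp [rotationMatrix, Matrix.mul_apply, Fin.sum_univ_two, ← sq] <;> grind

theorem one_sub_reflectionMatrix_mul_reflectionMatrix {c s : ℝ} (h : c ^ 2 + s ^ 2 = 1) :
    1 - (reflectionMatrix c s)ᴴ * reflectionMatrix (-c) s =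
      (2 * c : 𝕜) • (rotationMatrix c s : Matrix (Fin 2) (Fin 2) 𝕜) := by
  have h' : (c : 𝕜) ^ 2 + (s : 𝕜) ^ 2 = 1 := by exact_mod_cast h
  ext i j
  fin_cases i <;> fin_cases j <;>
    simp [reflectionMatrix, rotationMatrix, Matrix.mul_apply, Fin.sum_univ_two] <;>
    grind

end TwoByTwo

theorem mul_le_max_sq {x y : ℝ} (hx : 0 ≤ x) (hy : 0 ≤ y) : x * y ≤ max (x ^ 2) (y ^ 2) := by
  rcases le_total x y with h | h
  · exact le_max_of_le_right (by nlinarith)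
  · exact le_max_of_le_left (by nlinarith)

theorem stmt_4 {H : Type*} [NormedAddCommGroup H] [InnerProductSpace ℂ H]
    (δ a b : ℝ) (hδ0 : 0 < δ) (hδ1 : δ < 1/2)
    (ha : a = Real.sqrt (1/2 + δ)) (hb : b = Real.sqrt (1/2 - δ))
    (O₀ O₁ : Matrix (Fin 2) (Fin 2) ℂ)
    (hO₀ : O₀ = !![(2*a^2 - 1 : ℂ), (2*a*b : ℂ); (2*a*b : ℂ), (2*b^2 - 1 : ℂ)])
    (hO₁ : O₁ = !![(2*b^2 - 1 : ℂ), (2*a*b : ℂ); (2*a*b : ℂ), (2*a^2 - 1 : ℂ)])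
    (v₀ v₁ w₀ w₁ : PiLp 2 (fun _ : Fin 2 => H))
    (hw₀ : ∀ i, w₀ i = ∑ j, O₀ i j • v₀ j)
    (hw₁ : ∀ i, w₁ i = ∑ j, O₁ i j • v₁ j)
    (hconstraint : (2 : ℂ) = (inner ℂ v₀ v₁ : ℂ) - (inner ℂ w₀ w₁ : ℂ)) :
    1 / (2 * δ) ≤ max (‖v₀‖^2) (‖v₁‖^2) := by
  have ha2 : a ^ 2 = 1 / 2 + δ := by rw [ha]; exact Real.sq_sqrt (by linarith)
  have hb2 : b ^ 2 = 1 / 2 - δ := by rw [hb]; exact Real.sq_sqrt (by linarith)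
  have hpyth : (2 * δ) ^ 2 + (2 * a * b) ^ 2 = 1 := by
    linear_combination (4 * b ^ 2) * ha2 + (2 + 4 * δ) * hb2
  have hcos₀ : (2 * a ^ 2 - 1 : ℂ) = (2 * δ : ℝ) := by
    rw [← Complex.ofReal_pow, ha2]; push_cast; ring
  have hcos₁ : (2 * b ^ 2 - 1 : ℂ) = (-(2 * δ) : ℝ) := by
    rw [← Complex.ofReal_pow, hb2]; push_cast; ring
  have hO₀ : O₀ = reflectionMatrix (2 * δ) (2 * a * b) := by
    rw [hO₀, hcos₀, hcos₁, reflectionMatrix]; push_cast [neg_neg]; rfl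
  have hO₁ : O₁ = reflectionMatrix (-(2 * δ)) (2 * a * b) := by
    rw [hO₁, hcos₀, hcos₁, reflectionMatrix]; push_cast [neg_neg]; rfl
  have hw₀ : w₀ = O₀.ampliate v₀ := by ext i; exact hw₀ i
  have hw₁ : w₁ = O₁.ampliate v₁ := by ext i; exact hw₁ i
  set R : Matrix (Fin 2) (Fin 2) ℂ := rotationMatrix (2 * δ) (2 * a * b)
  have hconstraint : (2 : ℂ) = 2 * ((2 * δ : ℝ) : ℂ) * inner ℂ v₀ (R.ampliate v₁) := by
    refine hconstraint.trans ?_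
    rw [hw₀, hw₁, Matrix.inner_sub_inner_ampliate, hO₀, hO₁,
      one_sub_reflectionMatrix_mul_reflectionMatrix hpyth, Matrix.ampliate_smul, inner_smul_right]
    rfl
  have hcauchy : 2 ≤ 2 * (2 * δ) * (‖v₀‖ * ‖v₁‖) := by
    calc (2 : ℝ) = ‖(2 : ℂ)‖ := Complex.norm_two.symm
      _ = 2 * (2 * δ) * ‖inner ℂ v₀ (R.ampliate v₁)‖ := by
        rw [hconstraint, norm_mul, norm_mul, Complex.norm_real, Real.norm_of_nonneg (by positivity),
          Complex.norm_two]
      _ ≤ 2 * (2 * δ) * (‖v₀‖ * ‖v₁‖) := by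
        gcongr
        exact Matrix.norm_inner_ampliate_le_of_mem_unitary (rotationMatrix_mem_unitary hpyth) _ _
  rw [div_le_iff₀ (by positivity)]
  nlinarith [mul_le_max_sq (norm_nonneg v₀) (norm_nonneg v₁)]
end

section
/- Existence and uniqueness of transduction action: let H and L be Hilbert spaces (finite-dimensional) and S a unitary on H ⊕ L. For every ξ ∈ H there exist τ ∈ H and v ∈ L such that S(ξ ⊕ v) = τ ⊕ v, and τ is uniquely determined by ξ. Moreover, the map ξ ↦ τ is unitary on H. -/
/-!
Write `S = [[A, B], [C, D]]` with respect to `H ⊕ L`; the equation `S (ξ, v) = (τ, v)` asks for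
`(1 - D) v = C ξ`. As `S` is isometric, `D u = u` forces `S (0, u) = (0, u)`, and then
`⟪u, C ξ⟫ = ⟪S (0, u), S (ξ, 0)⟫ = 0`. So `C ξ` is orthogonal to the fixed vectors of the
contraction `D`, and for a contraction in finite dimension that orthogonal complement lies in
`range (1 - D)`.
Uniqueness and isometry of `ξ ↦ τ` both follow from `‖τ‖² + ‖v‖² = ‖ξ‖² + ‖v‖²` applied to
differences of solutions, and an isometry of the finite-dimensional `H` is unitary.
-/

open WithLp

namespace LinearMap

variable {𝕜 E : Type*} [RCLike 𝕜] [NormedAddCommGroup E] [InnerProductSpace 𝕜 E]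

/-- A vector orthogonal to every `f y - y` has `⟪f x, x⟫ = ‖x‖²`, which for a contraction forces
`f x = x`. -/
theorem orthogonal_range_sub_one_le_ker {f : E →ₗ[𝕜] E} (hf : ∀ x, ‖f x‖ ≤ ‖x‖) :
    (range (f - 1))ᗮ ≤ ker (f - 1) := by
  intro x hx
  have hinner : ∀ y, inner 𝕜 (f y) x = inner 𝕜 y x := by
    simpa [Submodule.mem_orthogonal, inner_sub_left, sub_eq_zero] using hx
  rw [mem_ker, sub_apply, Module.End.one_apply, sub_eq_zero]
  refine eq_of_norm_le_re_inner_eq_norm_sq (𝕜 := 𝕜) (hf x) ?_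
  rw [hinner, inner_self_eq_norm_sq]

theorem orthogonal_ker_sub_one_le_range [FiniteDimensional 𝕜 E] {f : E →ₗ[𝕜] E}
    (hf : ∀ x, ‖f x‖ ≤ ‖x‖) : (ker (f - 1))ᗮ ≤ range (f - 1) := by
  rw [← (range (f - 1)).orthogonal_orthogonal]
  exact Submodule.orthogonal_le (orthogonal_range_sub_one_le_ker hf)

end LinearMap

theorem WithLp.eq_toLp_fst_of_snd_eq {p : ENNReal} {α β : Type*} {x : WithLp p (α × β)} {v : β}
    (h : x.snd = v) : x = toLp p (x.fst, v) := by
  subst h; rfl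

namespace Transducer

variable {𝕜 H L : Type*} [RCLike 𝕜]
  [NormedAddCommGroup H] [InnerProductSpace 𝕜 H] [NormedAddCommGroup L] [InnerProductSpace 𝕜 L]
  (S : WithLp 2 (H × L) →ₗᵢ[𝕜] WithLp 2 (H × L))

def Transduces (ξ τ : H) : Prop :=
  ∃ v : L, S (toLp 2 (ξ, v)) = toLp 2 (τ, v)

variable {S}

theorem transduces_of_snd_eq {ξ : H} {v : L} (h : (S (toLp 2 (ξ, v))).snd = v) :
    Transduces S ξ (S (toLp 2 (ξ, v))).fst :=
  ⟨v, eq_toLp_fst_of_snd_eq h⟩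

theorem Transduces.add {ξ τ ξ' τ' : H} (h : Transduces S ξ τ) (h' : Transduces S ξ' τ') :
    Transduces S (ξ + ξ') (τ + τ') := by
  obtain ⟨v, hv⟩ := h
  obtain ⟨v', hv'⟩ := h'
  refine ⟨v + v', ?_⟩
  simpa only [← map_add, ← toLp_add, Prod.mk_add_mk] using congrArg₂ (· + ·) hv hv'

theorem Transduces.sub {ξ τ ξ' τ' : H} (h : Transduces S ξ τ) (h' : Transduces S ξ' τ') :
    Transduces S (ξ - ξ') (τ - τ') := by
  obtain ⟨v, hv⟩ := h
  obtain ⟨v', hv'⟩ := h'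
  refine ⟨v - v', ?_⟩
  simpa only [← map_sub, ← toLp_sub, Prod.mk_sub_mk] using congrArg₂ (· - ·) hv hv'

theorem Transduces.smul {ξ τ : H} (h : Transduces S ξ τ) (c : 𝕜) :
    Transduces S (c • ξ) (c • τ) := by
  obtain ⟨v, hv⟩ := h
  refine ⟨c • v, ?_⟩
  simpa only [← map_smul, ← toLp_smul, Prod.smul_mk] using congrArg (c • ·) hv

theorem Transduces.norm_eq {ξ τ : H} (h : Transduces S ξ τ) : ‖τ‖ = ‖ξ‖ := by
  obtain ⟨v, hv⟩ := h
  have hsq := congrArg (‖·‖ ^ 2) hv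
  simp only [S.norm_map, prod_norm_sq_eq_of_L2] at hsq
  exact (sq_eq_sq₀ (norm_nonneg _) (norm_nonneg _)).1 (by simpa using hsq.symm)

theorem Transduces.unique {ξ τ τ' : H} (h : Transduces S ξ τ) (h' : Transduces S ξ τ') :
    τ = τ' := by
  have := (h.sub h').norm_eq
  rwa [sub_self, norm_zero, norm_eq_zero, sub_eq_zero] at this

variable (S) in
/-- The block `D` of `S = [[A, B], [C, D]]`, acting on the private space. -/
noncomputable def privateBlock : L →ₗ[𝕜] L where
  toFun v := (S (toLp 2 (0, v))).snd
  map_add' v w := by rw [← add_snd, ← map_add, ← toLp_add, Prod.mk_add_mk, add_zero]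
  map_smul' c v := by rw [← smul_snd, ← map_smul, ← toLp_smul, Prod.smul_mk, smul_zero]; rfl

theorem privateBlock_apply (v : L) : privateBlock S v = (S (toLp 2 (0, v))).snd := rfl

theorem norm_privateBlock_apply_le (v : L) : ‖privateBlock S v‖ ≤ ‖v‖ :=
  calc ‖privateBlock S v‖ ≤ ‖S (toLp 2 (0, v))‖ := WithLp.norm_snd_le _ _
    _ = ‖v‖ := by rw [S.norm_map, norm_toLp_snd]

theorem apply_toLp_zero_eq_of_privateBlock_apply_eq {u : L} (hu : privateBlock S u = u) :
    S (toLp 2 (0, u)) = toLp 2 (0, u) := by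
  have hfst : (S (toLp 2 (0, u))).fst = 0 := by
    simpa using (transduces_of_snd_eq hu).norm_eq
  rw [eq_toLp_fst_of_snd_eq hu, hfst]

theorem inner_snd_apply_toLp_eq_zero {u : L} (hu : privateBlock S u = u) (ξ : H) :
    inner 𝕜 u (S (toLp 2 (ξ, 0))).snd = 0 := by
  have := S.inner_map_map (toLp 2 (0, u)) (toLp 2 (ξ, 0))
  rw [apply_toLp_zero_eq_of_privateBlock_apply_eq hu, prod_inner_apply, prod_inner_apply] at this
  simpa using this

theorem exists_transduces [FiniteDimensional 𝕜 L] (ξ : H) : ∃ τ, Transduces S ξ τ := by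
  have hC : (S (toLp 2 (ξ, 0))).snd ∈ (LinearMap.ker (privateBlock S - 1))ᗮ := by
    intro u hu
    rw [LinearMap.mem_ker, LinearMap.sub_apply, Module.End.one_apply, sub_eq_zero] at hu
    exact inner_snd_apply_toLp_eq_zero hu ξ
  obtain ⟨v, hv⟩ := LinearMap.orthogonal_ker_sub_one_le_range norm_privateBlock_apply_le
    (Submodule.neg_mem _ hC)
  refine ⟨_, transduces_of_snd_eq (v := v) ?_⟩
  have hsplit : (S (toLp 2 (ξ, v))).snd = (S (toLp 2 (ξ, 0))).snd + privateBlock S v := by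
    rw [privateBlock_apply, ← add_snd, ← map_add, ← toLp_add, Prod.mk_add_mk, add_zero, zero_add]
  rw [LinearMap.sub_apply, Module.End.one_apply] at hv
  rw [hsplit]
  linear_combination (norm := module) hv

variable [FiniteDimensional 𝕜 L]

variable (S) in
noncomputable def transductionAction : H →ₗᵢ[𝕜] H where
  toFun ξ := (exists_transduces (S := S) ξ).choose
  map_add' ξ ξ' :=
    ((exists_transduces _).choose_spec.unique
      ((exists_transduces ξ).choose_spec.add (exists_transduces ξ').choose_spec))
  map_smul' c ξ :=
    (exists_transduces _).choose_spec.unique ((exists_transduces ξ).choose_spec.smul c)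
  norm_map' ξ := (exists_transduces ξ).choose_spec.norm_eq

theorem transduces_transductionAction (ξ : H) : Transduces S ξ (transductionAction S ξ) :=
  (exists_transduces ξ).choose_spec

end Transducer

open Transducer in
theorem stmt_5 {H L : Type*}
    [NormedAddCommGroup H] [InnerProductSpace ℂ H] [FiniteDimensional ℂ H]
    [NormedAddCommGroup L] [InnerProductSpace ℂ L] [FiniteDimensional ℂ L]
    (S : WithLp 2 (H × L) ≃ₗᵢ[ℂ] WithLp 2 (H × L)) :
    ∃ T : H ≃ₗᵢ[ℂ] H, ∀ ξ : H,
      (∃ v : L, S ((WithLp.equiv 2 (H × L)).symm (ξ, v)) =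
          (WithLp.equiv 2 (H × L)).symm (T ξ, v)) ∧
      (∀ (τ : H) (v : L), S ((WithLp.equiv 2 (H × L)).symm (ξ, v)) =
          (WithLp.equiv 2 (H × L)).symm (τ, v) → τ = T ξ) := by
  refine ⟨(transductionAction S.toLinearIsometry).toLinearIsometryEquiv rfl, fun ξ => ?_⟩
  have hT : Transduces S.toLinearIsometry ξ _ := transduces_transductionAction ξ
  exact ⟨hT, fun τ v hv => Transduces.unique ⟨v, hv⟩ hT⟩
end

section
/- Fixed-point computation for the recurrent case of the quantum walk on the ray: let 0 < p < 1/2, γ = √(p/(1−p)), and let R₁, R₂ be unitary operators on ℓ²(ℤ_{≥0}) such that for every nonnegative integer i, R₁ fixes |2i⟩ + γ|2i+1⟩ and negates |2i⟩ − γ^{-1}|2i+1⟩ (acting as identity outside the spans of such pairs), while R₂ fixes |0⟩, fixes |2i+1⟩ + γ|2i+2⟩ and negates |2i+1⟩ − γ^{-1}|2i+2⟩. Then the vector ψ = Σ_{j=0}^∞ γ^j |j⟩ ∈ ℓ²(ℤ_{≥0}) satisfies R₂R₁ψ = ψ. -/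
/-!
Since `γ < 1`, the terms `γ ^ j • |j⟩` of `ψ` are summable, so `ψ` may be summed two terms at a
time. Grouping from index `0` writes `ψ` as a sum of the multiples `γ ^ (2i) • (|2i⟩ + γ|2i+1⟩)`
of vectors fixed by `R₁`; splitting off `|0⟩` and grouping from index `1` writes it as `|0⟩` plus
a sum of multiples `γ ^ (2i+1) • (|2i+1⟩ + γ|2i+2⟩)` of vectors fixed by `R₂`. Both operators are
continuous and linear, so they fix `ψ`.
-/

section Pairs

variable {E : Type*} [NormedAddCommGroup E] [CompleteSpace E] {f : ℕ → E}

theorem Summable.tsum_eq_tsum_pairs (hf : Summable f) :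
    ∑' j, f j = ∑' j, (f (2 * j) + f (2 * j + 1)) := by
  have he : Summable fun j => f (2 * j) := hf.comp_injective fun a b h => by omega
  have ho : Summable fun j => f (2 * j + 1) := hf.comp_injective fun a b h => by omega
  rw [← tsum_even_add_odd he ho, he.tsum_add ho]

theorem Summable.tsum_eq_zero_add_tsum_pairs (hf : Summable f) :
    ∑' j, f j = f 0 + ∑' j, (f (2 * j + 1) + f (2 * j + 2)) := by
  have hshift : Summable fun j => f (j + 1) := (summable_nat_add_iff 1).2 hf
  rw [hf.tsum_eq_zero_add, hshift.tsum_eq_tsum_pairs]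

end Pairs

theorem ContinuousLinearEquiv.map_tsum_eq_self {R M ι : Type*} [Semiring R] [AddCommMonoid M]
    [TopologicalSpace M] [T2Space M] [Module R M] (T : M ≃L[R] M) {g : ι → M}
    (h : ∀ j, T (g j) = g j) : T (∑' j, g j) = ∑' j, g j :=
  T.map_tsum.trans (tsum_congr h)

theorem summable_ofReal_pow_smul {E : Type*} [NormedAddCommGroup E] [NormedSpace ℂ E]
    [CompleteSpace E] {γ : ℝ} (hγ0 : 0 ≤ γ) (hγ1 : γ < 1) {v : ℕ → E} (hv : ∀ j, ‖v j‖ ≤ 1) :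
    Summable fun j => ((γ ^ j : ℝ) : ℂ) • v j := by
  refine Summable.of_norm_bounded (summable_geometric_of_lt_one hγ0 hγ1) fun j => ?_
  rw [norm_smul, Complex.norm_real, Real.norm_of_nonneg (pow_nonneg hγ0 j)]
  exact mul_le_of_le_one_right (pow_nonneg hγ0 j) (hv j)

theorem Real.sqrt_div_one_sub_lt_one {p : ℝ} (hp : p < 1 / 2) : √(p / (1 - p)) < 1 := by
  rw [Real.sqrt_lt' one_pos, one_pow, div_lt_one (by linarith)]
  linarith

theorem stmt_9_general (p γ : ℝ) (hp : p < 1/2)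
    (hγ : γ = Real.sqrt (p / (1 - p)))
    (R₁ R₂ : lp (fun _ : ℕ => ℂ) 2 ≃ₗᵢ[ℂ] lp (fun _ : ℕ => ℂ) 2)
    (e : ℕ → lp (fun _ : ℕ => ℂ) 2) (he : ∀ j, e j = lp.single 2 j (1 : ℂ))
    (hR₁fix : ∀ i : ℕ,
      R₁ (e (2*i) + (γ : ℂ) • e (2*i + 1)) = e (2*i) + (γ : ℂ) • e (2*i + 1))
    (hR₂zero : R₂ (e 0) = e 0)
    (hR₂fix : ∀ i : ℕ,
      R₂ (e (2*i + 1) + (γ : ℂ) • e (2*i + 2)) = e (2*i + 1) + (γ : ℂ) • e (2*i + 2))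
    (ψ : lp (fun _ : ℕ => ℂ) 2) (hψ : ψ = ∑' j : ℕ, ((γ ^ j : ℝ) : ℂ) • e j) :
    R₂ (R₁ ψ) = ψ := by
  set f : ℕ → lp (fun _ : ℕ => ℂ) 2 := fun j => ((γ ^ j : ℝ) : ℂ) • e j
  have hγ0 : 0 ≤ γ := hγ ▸ Real.sqrt_nonneg _
  have hf : Summable f := summable_ofReal_pow_smul hγ0 (hγ ▸ Real.sqrt_div_one_sub_lt_one hp)
    fun j => by rw [he, lp.norm_single (by norm_num), norm_one]
  have hpair (j : ℕ) : f j + f (j + 1) = ((γ ^ j : ℝ) : ℂ) • (e j + (γ : ℂ) • e (j + 1)) := by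
    simp only [f, smul_add, smul_smul, pow_succ, Complex.ofReal_mul]
  have hR₁ψ : R₁ ψ = ψ := by
    rw [hψ, hf.tsum_eq_tsum_pairs]
    refine R₁.toContinuousLinearEquiv.map_tsum_eq_self fun j => ?_
    change R₁ _ = _
    rw [hpair, map_smul, hR₁fix]
  have hR₂ψ : R₂ ψ = ψ := by
    rw [hψ, hf.tsum_eq_zero_add_tsum_pairs, map_add]
    congr 1
    · simpa [f] using hR₂zero
    refine R₂.toContinuousLinearEquiv.map_tsum_eq_self fun j => ?_
    change R₂ (f (2 * j + 1) + f (2 * j + 1 + 1)) = _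
    rw [hpair, map_smul]
    exact congrArg _ (hR₂fix j)
  rw [hR₁ψ, hR₂ψ]

theorem stmt_9 (p γ : ℝ) (hp0 : 0 < p) (hp : p < 1/2)
    (hγ : γ = Real.sqrt (p / (1 - p)))
    (R₁ R₂ : lp (fun _ : ℕ => ℂ) 2 ≃ₗᵢ[ℂ] lp (fun _ : ℕ => ℂ) 2)
    (e : ℕ → lp (fun _ : ℕ => ℂ) 2) (he : ∀ j, e j = lp.single 2 j (1 : ℂ))
    (hR₁fix : ∀ i : ℕ,
      R₁ (e (2*i) + (γ : ℂ) • e (2*i + 1)) = e (2*i) + (γ : ℂ) • e (2*i + 1))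
    (hR₁neg : ∀ i : ℕ,
      R₁ (e (2*i) - ((γ⁻¹ : ℝ) : ℂ) • e (2*i + 1)) =
        -(e (2*i) - ((γ⁻¹ : ℝ) : ℂ) • e (2*i + 1)))
    (hR₂zero : R₂ (e 0) = e 0)
    (hR₂fix : ∀ i : ℕ,
      R₂ (e (2*i + 1) + (γ : ℂ) • e (2*i + 2)) = e (2*i + 1) + (γ : ℂ) • e (2*i + 2))
    (hR₂neg : ∀ i : ℕ,
      R₂ (e (2*i + 1) - ((γ⁻¹ : ℝ) : ℂ) • e (2*i + 2)) =
        -(e (2*i + 1) - ((γ⁻¹ : ℝ) : ℂ) • e (2*i + 2)))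
    (ψ : lp (fun _ : ℕ => ℂ) 2) (hψ : ψ = ∑' j : ℕ, ((γ ^ j : ℝ) : ℂ) • e j) :
    R₂ (R₁ ψ) = ψ :=
  stmt_9_general p γ hp hγ R₁ R₂ e he hR₁fix hR₂zero hR₂fix ψ hψ
end

section
/- Phase-flip computation for the transient case of the quantum walk on the ray: let 1/2 < p < 1, γ = √(p/(1−p)) > 1, and let R₁, R₂ be as in the recurrent case (R₁ fixes |2i⟩ + γ|2i+1⟩ and negates |2i⟩ − γ^{-1}|2i+1⟩; R₂ fixes |0⟩, fixes |2i+1⟩ + γ|2i+2⟩, negates |2i+1⟩ − γ^{-1}|2i+2⟩). Then the vector ψ = Σ_{j=0}^∞ (−γ)^{-j}|j⟩ ∈ ℓ²(ℤ_{≥0}) satisfies R₂R₁ψ = −|0⟩ + Σ_{j=1}^∞ (−γ)^{-j}|j⟩, i.e. R₂R₁(|0⟩ ⊕ v) = (−|0⟩) ⊕ v where v = Σ_{j≥1}(−γ)^{-j}|j⟩. -/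
/-!
Since γ > 1 the geometric series ψ = Σ (−γ)^{-j} |j⟩ converges, and it splits in two ways into
blocks of two consecutive terms. Grouped as (|2i⟩, |2i+1⟩), each block is a multiple of
|2i⟩ − γ⁻¹|2i+1⟩, which R₁ negates, so R₁ψ = −ψ. Grouped as |0⟩ plus the blocks
(|2i+1⟩, |2i+2⟩), the tail v is a sum of multiples of |2i+1⟩ − γ⁻¹|2i+2⟩, which R₂ negates,
while R₂ fixes |0⟩. Hence R₂R₁ψ = −R₂(|0⟩ + v) = −|0⟩ + v.
-/

theorem one_lt_sqrt_div_one_sub {p : ℝ} (hp : 1 / 2 < p) (hp1 : p < 1) :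
    1 < √(p / (1 - p)) := by
  rw [Real.lt_sqrt zero_le_one, one_pow, lt_div_iff₀ (by linarith)]
  linarith

theorem summable_pow_smul_of_norm_lt_one {𝕜 E : Type*} [NormedField 𝕜] [NormedAddCommGroup E]
    [NormedSpace 𝕜 E] [CompleteSpace E] {c : 𝕜} (hc : ‖c‖ < 1) {e : ℕ → E} {C : ℝ}
    (he : ∀ j, ‖e j‖ ≤ C) : Summable fun j => c ^ j • e j := by
  refine Summable.of_norm_bounded
    ((summable_geometric_of_lt_one (norm_nonneg c) hc).mul_right C) fun j => ?_
  rw [norm_smul, norm_pow]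
  exact mul_le_mul_of_nonneg_left (he j) (by positivity)

theorem map_tsum_eq_neg_of_map_pair_eq_neg {E F : Type*} [UniformSpace E] [AddCommGroup E]
    [IsUniformAddGroup E] [CompleteSpace E] [T2Space E] [FunLike F E E]
    [AddMonoidHomClass F E E] [ContinuousMapClass F E E] (R : F) {f : ℕ → E} (hf : Summable f)
    (hR : ∀ k, R (f (2 * k) + f (2 * k + 1)) = -(f (2 * k) + f (2 * k + 1))) :
    R (∑' j, f j) = -∑' j, f j := by
  have heven : Summable fun k => f (2 * k) := hf.comp_injective fun _ _ h => by omega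
  have hodd : Summable fun k => f (2 * k + 1) := hf.comp_injective fun _ _ h => by omega
  have hpairs : ∑' j, f j = ∑' k, (f (2 * k) + f (2 * k + 1)) := by
    rw [← tsum_even_add_odd heven hodd, heven.tsum_add hodd]
  rw [hpairs, (heven.add hodd).map_tsum R (map_continuous R), tsum_congr hR, tsum_neg]

theorem map_tsum_pow_smul_eq_neg {𝕜 E F : Type*} [NormedField 𝕜] [NormedAddCommGroup E]
    [NormedSpace 𝕜 E] [CompleteSpace E] [FunLike F E E] [LinearMapClass F 𝕜 E E]
    [ContinuousMapClass F E E] (R : F) (c : 𝕜) {e : ℕ → E}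
    (hs : Summable fun j => c ^ j • e j)
    (hR : ∀ k, R (e (2 * k) + c • e (2 * k + 1)) = -(e (2 * k) + c • e (2 * k + 1))) :
    R (∑' j, c ^ j • e j) = -∑' j, c ^ j • e j := by
  refine map_tsum_eq_neg_of_map_pair_eq_neg R hs fun k => ?_
  have hpair : c ^ (2 * k) • e (2 * k) + c ^ (2 * k + 1) • e (2 * k + 1) =
      c ^ (2 * k) • (e (2 * k) + c • e (2 * k + 1)) := by
    rw [smul_add, smul_smul, ← pow_succ]
  rw [hpair, map_smul, hR, smul_neg]

theorem stmt_10_general (p γ : ℝ) (hp : 1/2 < p) (hp1 : p < 1)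
    (hγ : γ = Real.sqrt (p / (1 - p)))
    (R₁ R₂ : lp (fun _ : ℕ => ℂ) 2 ≃ₗᵢ[ℂ] lp (fun _ : ℕ => ℂ) 2)
    (e : ℕ → lp (fun _ : ℕ => ℂ) 2) (he : ∀ j, e j = lp.single 2 j (1 : ℂ))
    (hR₁neg : ∀ i : ℕ,
      R₁ (e (2*i) - ((γ⁻¹ : ℝ) : ℂ) • e (2*i + 1)) =
        -(e (2*i) - ((γ⁻¹ : ℝ) : ℂ) • e (2*i + 1)))
    (hR₂zero : R₂ (e 0) = e 0)
    (hR₂neg : ∀ i : ℕ,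
      R₂ (e (2*i + 1) - ((γ⁻¹ : ℝ) : ℂ) • e (2*i + 2)) =
        -(e (2*i + 1) - ((γ⁻¹ : ℝ) : ℂ) • e (2*i + 2)))
    (ψ v : lp (fun _ : ℕ => ℂ) 2)
    (hψ : ψ = ∑' j : ℕ, ((((-γ)⁻¹) ^ j : ℝ) : ℂ) • e j)
    (hv : v = ∑' j : ℕ, ((((-γ)⁻¹) ^ (j + 1) : ℝ) : ℂ) • e (j + 1)) :
    R₂ (R₁ ψ) = -(e 0) + v := by
  simp only [Complex.ofReal_pow] at hψ hv
  set c : ℂ := (((-γ)⁻¹ : ℝ) : ℂ)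
  have hγ1 : 1 < γ := hγ ▸ one_lt_sqrt_div_one_sub hp hp1
  have hc : ‖c‖ < 1 := by
    rw [Complex.norm_real, Real.norm_eq_abs, abs_inv, abs_neg, abs_of_pos (by linarith)]
    exact inv_lt_one_of_one_lt₀ hγ1
  have hγc : ((γ⁻¹ : ℝ) : ℂ) = -c := by simp [c, inv_neg]
  simp only [hγc, neg_smul, sub_neg_eq_add] at hR₁neg hR₂neg
  have he1 : ∀ j, ‖e j‖ ≤ 1 := fun j => by rw [he, lp.norm_single two_pos, norm_one]
  have hs : Summable fun j => c ^ j • e j := summable_pow_smul_of_norm_lt_one hc he1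
  have hψv : ψ = e 0 + v := by rw [hψ, hs.tsum_eq_zero_add, hv, pow_zero, one_smul]
  have hR₁ψ : R₁ ψ = -ψ := hψ ▸ map_tsum_pow_smul_eq_neg R₁ c hs hR₁neg
  have hR₂v : R₂ v = -v := by
    have hshift : v = c • ∑' j, c ^ j • e (j + 1) := by
      simp only [hv, pow_succ', mul_smul, tsum_const_smul'']
    have hR₂tail := map_tsum_pow_smul_eq_neg R₂ c (e := fun j => e (j + 1))
      (summable_pow_smul_of_norm_lt_one hc fun j => he1 (j + 1)) hR₂neg
    rw [hshift, map_smul, hR₂tail, smul_neg]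
  rw [hR₁ψ, map_neg, hψv, map_add, hR₂zero, hR₂v, neg_add, neg_neg]

theorem stmt_10 (p γ : ℝ) (hp : 1/2 < p) (hp1 : p < 1)
    (hγ : γ = Real.sqrt (p / (1 - p)))
    (R₁ R₂ : lp (fun _ : ℕ => ℂ) 2 ≃ₗᵢ[ℂ] lp (fun _ : ℕ => ℂ) 2)
    (e : ℕ → lp (fun _ : ℕ => ℂ) 2) (he : ∀ j, e j = lp.single 2 j (1 : ℂ))
    (hR₁fix : ∀ i : ℕ,
      R₁ (e (2*i) + (γ : ℂ) • e (2*i + 1)) = e (2*i) + (γ : ℂ) • e (2*i + 1))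
    (hR₁neg : ∀ i : ℕ,
      R₁ (e (2*i) - ((γ⁻¹ : ℝ) : ℂ) • e (2*i + 1)) =
        -(e (2*i) - ((γ⁻¹ : ℝ) : ℂ) • e (2*i + 1)))
    (hR₂zero : R₂ (e 0) = e 0)
    (hR₂fix : ∀ i : ℕ,
      R₂ (e (2*i + 1) + (γ : ℂ) • e (2*i + 2)) = e (2*i + 1) + (γ : ℂ) • e (2*i + 2))
    (hR₂neg : ∀ i : ℕ,
      R₂ (e (2*i + 1) - ((γ⁻¹ : ℝ) : ℂ) • e (2*i + 2)) =
        -(e (2*i + 1) - ((γ⁻¹ : ℝ) : ℂ) • e (2*i + 2)))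
    (ψ v : lp (fun _ : ℕ => ℂ) 2)
    (hψ : ψ = ∑' j : ℕ, ((((-γ)⁻¹) ^ j : ℝ) : ℂ) • e j)
    (hv : v = ∑' j : ℕ, ((((-γ)⁻¹) ^ (j + 1) : ℝ) : ℂ) • e (j + 1)) :
    R₂ (R₁ ψ) = -(e 0) + v :=
  stmt_10_general p γ hp hp1 hγ R₁ R₂ e he hR₁neg hR₂zero hR₂neg ψ v hψ hv
end
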